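/- Let u be a uniform word-representant of a simple graph G, and let a, b, c be three distinct, pairwise adjacent vertices of G. Then, regarding u as a cyclic word, exactly one of the following holds: (i) between every pair of cyclically consecutive occurrences of a, the letter b occurs before the letter c; (ii) between every pair of cyclically consecutive occurrences of a, the letter c occurs before the letter b. -/

import Mathlib

open Classical

/-- Distinct letters `x` and `y` alternate in the word `w`: both occur in `w`, and the
subsequence of `w` consisting of the occurrences of `x` and `y` is strictly alternating. -/
def Alternate {V : Type*} (w : List V) (x y : V) : Prop :=
  x ∈ w ∧ y ∈ w ∧ (w.filter fun z => decide (z = x ∨ z = y)).Chain' (· ≠ ·)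

/-- The word `w` is a word-representant of the simple graph `G`: every vertex occurs in `w`,
and two distinct vertices alternate in `w` iff they are adjacent in `G`. -/
def Represents {V : Type*} (G : SimpleGraph V) (w : List V) : Prop :=
  (∀ v : V, v ∈ w) ∧ ∀ x y : V, x ≠ y → (Alternate w x y ↔ G.Adj x y)

/-- Regarding `u` as a cyclic word, `s` is the segment lying strictly between two cyclically
consecutive occurrences of the letter `a`: some cyclic rotation of `u` has the form
`a :: s ++ a :: t'` where `a ∉ s` (two distinct cyclically consecutive occurrences of `a`),
or the form `a :: s` with `a ∉ s` (then `a` occurs exactly once, and the cyclic interval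
from that occurrence around to itself is `s`). -/
def IsCyclicGap {V : Type*} (u : List V) (a : V) (s : List V) : Prop :=
  ∃ (i : ℕ) (t : List V), u.rotate i = a :: (s ++ t) ∧ a ∉ s ∧
    (t = [] ∨ ∃ t' : List V, t = a :: t')

/-- In the segment `s`, some occurrence of the letter `b` precedes some occurrence of the
letter `c`. -/
def OccursBefore {V : Type*} (s : List V) (b c : V) : Prop :=
  ∃ s₁ s₂ s₃ : List V, s = s₁ ++ b :: (s₂ ++ c :: s₃)

/-!
Since `a` alternates with `b` in the uniform word `u`, every rotation of `u` that starts with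
`a` restricts to `abab⋯ab` on the letters `a, b`. Hence each gap of `a` contains exactly one `b`,
and likewise exactly one `c`. Cut a rotation starting with `a` in front of another occurrence of
`a`: the prefix then contains as many `b`s as `a`s and as many `c`s as `a`s, so it is balanced in
`b` and `c`; as `b` and `c` alternate, the first of `b, c` after the cut is the first of `b, c`
in the whole rotation. So the order of `b` and `c` is the same in all gaps.
-/

namespace List

variable {α : Type*}

theorem IsRotated.exists_eq_append_swap {l l' : List α} (h : l ~r l') :
    ∃ p q, l = p ++ q ∧ l' = q ++ p := by
  obtain ⟨n, hn, rfl⟩ := isRotated_iff_mod.mp h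
  exact ⟨l.take n, l.drop n, (take_append_drop n l).symm, rotate_eq_drop_append_take hn⟩

theorem IsRotated.filter {l l' : List α} (h : l ~r l') (f : α → Bool) :
    l.filter f ~r l'.filter f := by
  obtain ⟨p, q, rfl, rfl⟩ := h.exists_eq_append_swap
  simpa only [filter_append] using isRotated_append

section
variable [DecidableEq α] {x y : α}

theorem count_eq_count_add_ite_of_isChain_ne (hxy : x ≠ y) {l r : List α} {z : α}
    (hmem : ∀ w ∈ l ++ z :: r, w = x ∨ w = y) (hchain : (l ++ z :: r).IsChain (· ≠ ·))
    (hhead : (l ++ z :: r).head? = some x) :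
    l.count x = l.count y + if z = x then 0 else 1 := by
  induction l generalizing x y with
  | nil =>
    obtain rfl : z = x := by simpa using hhead
    simp
  | cons v l ih =>
    obtain rfl : v = x := by simpa using hhead
    obtain ⟨v', r', hv'⟩ : ∃ v' r', l ++ z :: r = v' :: r' := exists_cons_of_ne_nil (by simp)
    have hv'y : v' = y := by
      have hne : v ≠ v' := by
        rw [cons_append, hv'] at hchain
        exact (isChain_cons_cons.mp hchain).1
      have := hmem v' (by simp [hv'])
      tauto
    have ih := ih hxy.symm (fun w hw => (hmem w (mem_cons_of_mem _ hw)).symm)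
      hchain.tail (by rw [hv', hv'y]; rfl)
    have hz := hmem z (by simp)
    rw [count_cons_self, count_cons_of_ne hxy]
    split_ifs at ih ⊢ <;> grind

theorem count_eq_count_iff_of_isChain_ne (hxy : x ≠ y) {l r : List α} {z : α}
    (hmem : ∀ w ∈ l ++ z :: r, w = x ∨ w = y) (hchain : (l ++ z :: r).IsChain (· ≠ ·)) :
    l.count x = l.count y ↔ (l ++ z :: r).head? = some z := by
  obtain ⟨h, r', hh⟩ : ∃ h r', l ++ z :: r = h :: r' := exists_cons_of_ne_nil (by simp)
  have hhead : (l ++ z :: r).head? = some h := by rw [hh]; rfl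
  rw [hhead, Option.some_inj]
  rcases hmem h (by simp [hh]) with rfl | rfl
  · have := count_eq_count_add_ite_of_isChain_ne hxy hmem hchain hhead
    split_ifs at this <;> grind
  · have := count_eq_count_add_ite_of_isChain_ne hxy.symm
      (fun w hw => (hmem w hw).symm) hchain hhead
    split_ifs at this <;> grind

theorem cycle_chain_ne_of_count_eq (hxy : x ≠ y) {m : List α}
    (hmem : ∀ w ∈ m, w = x ∨ w = y) (hchain : m.IsChain (· ≠ ·))
    (hcount : m.count x = m.count y) :
    Cycle.Chain (· ≠ ·) (m : Cycle α) := by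
  rcases m with _ | ⟨h, l⟩
  · exact Cycle.Chain.nil _
  rcases l.eq_nil_or_concat' with rfl | ⟨l, z, rfl⟩
  · rcases hmem h (by simp) with rfl | rfl <;> simp [hxy, hxy.symm] at hcount
  have hzh : z ≠ h := by
    rintro rfl
    rw [← cons_append] at hmem hchain hcount
    have hbal := (count_eq_count_iff_of_isChain_ne hxy hmem hchain).mpr rfl
    have hz := hmem z (by simp)
    simp only [count_append, count_singleton] at hcount
    split_ifs at hcount <;> grind
  rw [Cycle.chain_coe_cons, ← cons_append]
  exact hchain.append (isChain_singleton _)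
    (by rw [← cons_append, getLast?_concat]; simpa using hzh)

end
end List

theorem Cycle.Chain.isChain {α : Type*} {R : α → α → Prop} {l : List α}
    (h : Cycle.Chain R (l : Cycle α)) : l.IsChain R := by
  rcases l with _ | ⟨a, l⟩
  · exact List.isChain_nil
  · exact ((Cycle.chain_coe_cons R a l).mp h).left_of_append

theorem occursBefore_or_occursBefore {V : Type*} {s : List V} {b c : V} (hb : b ∈ s)
    (hc : c ∈ s) (hbc : b ≠ c) : OccursBefore s b c ∨ OccursBefore s c b := by
  obtain ⟨s₁, s₂, rfl⟩ := List.append_of_mem hb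
  rcases List.mem_append.mp hc with hc | hc
  · obtain ⟨s₃, s₄, rfl⟩ := List.append_of_mem hc
    exact Or.inr ⟨s₃, s₄, s₂, by simp⟩
  · obtain ⟨s₃, s₄, rfl⟩ :=
      List.append_of_mem ((List.mem_cons.mp hc).resolve_left hbc.symm)
    exact Or.inl ⟨s₁, s₃, s₄, rfl⟩

theorem exists_isCyclicGap {V : Type*} {u : List V} {a : V} (ha : a ∈ u) :
    ∃ s, IsCyclicGap u a s := by
  obtain ⟨p, q, rfl⟩ := List.append_of_mem ha
  have hrot : (p ++ a :: q).rotate p.length = a :: (q ++ p) := List.rotate_append_length_eq _ _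
  by_cases h : a ∈ q ++ p
  · obtain ⟨s, t, has, hst, -⟩ := List.exists_erase_eq h
    exact ⟨s, p.length, a :: t, by rw [hrot, hst], has, Or.inr ⟨t, rfl⟩⟩
  · exact ⟨q ++ p, p.length, [], by rw [hrot, List.append_nil], h, Or.inl rfl⟩

section
variable {V : Type*} [DecidableEq V] {u : List V} {a b c x y : V} {s s' : List V}

def pairSubword (w : List V) (x y : V) : List V := w.filter fun z => z = x ∨ z = y

@[simp] theorem pairSubword_append (w w' : List V) :
    pairSubword (w ++ w') x y = pairSubword w x y ++ pairSubword w' x y :=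
  List.filter_append ..

@[simp] theorem pairSubword_cons_left (w : List V) :
    pairSubword (x :: w) x y = x :: pairSubword w x y := by
  simp [pairSubword]

theorem pairSubword_cons_of_ne {z : V} (hx : z ≠ x) (hy : z ≠ y) (w : List V) :
    pairSubword (z :: w) x y = pairSubword w x y := by
  simp [pairSubword, hx, hy]

@[simp] theorem count_pairSubword_left (w : List V) : (pairSubword w x y).count x = w.count x :=
  List.count_filter (by simp)

@[simp] theorem count_pairSubword_right (w : List V) : (pairSubword w x y).count y = w.count y :=
  List.count_filter (by simp)

theorem eq_or_eq_of_mem_pairSubword {w : List V} {z : V} (hz : z ∈ pairSubword w x y) :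
    z = x ∨ z = y := by
  simpa using (List.mem_filter.mp hz).2

/-- Unlike `Alternate`, this is invariant under rotating `u`. -/
def CyclicallyAlternate (u : List V) (x y : V) : Prop :=
  Cycle.Chain (· ≠ ·) (pairSubword u x y : Cycle V)

theorem Alternate.cyclicallyAlternate (h : Alternate u x y) (hxy : x ≠ y)
    (hcount : u.count x = u.count y) : CyclicallyAlternate u x y :=
  List.cycle_chain_ne_of_count_eq hxy (fun _ => eq_or_eq_of_mem_pairSubword)
    (by unfold pairSubword; convert (show List.IsChain _ _ from h.2.2)) (by simpa using hcount)

namespace CyclicallyAlternate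

theorem of_isRotated {w : List V} (h : CyclicallyAlternate u x y) (hr : u ~r w) :
    CyclicallyAlternate w x y := by
  rwa [CyclicallyAlternate, pairSubword, ← Cycle.coe_eq_coe.mpr (hr.filter _)]

theorem isChain (h : CyclicallyAlternate u x y) : (pairSubword u x y).IsChain (· ≠ ·) :=
  Cycle.Chain.isChain h

end CyclicallyAlternate

theorem count_eq_count_add_one_of_isChain_pairSubword (hxy : x ≠ y) {p q : List V}
    (h : (pairSubword (x :: (p ++ x :: q)) x y).IsChain (· ≠ ·)) :
    p.count y = p.count x + 1 := by
  have hmem : ∀ z ∈ pairSubword (x :: (p ++ x :: q)) x y, z = x ∨ z = y :=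
    fun _ => eq_or_eq_of_mem_pairSubword
  simp only [pairSubword_cons_left, pairSubword_append, ← List.cons_append] at h hmem
  have := (List.count_eq_count_iff_of_isChain_ne hxy hmem h).mpr rfl
  simpa [List.count_cons_of_ne hxy] using this.symm

theorem CyclicallyAlternate.count_eq_one_of_isCyclicGap (h : CyclicallyAlternate u a b)
    (hab : a ≠ b) (hs : IsCyclicGap u a s) : s.count b = 1 := by
  obtain ⟨i, t, hw, has, rfl | ⟨t, rfl⟩⟩ := hs
  · -- `a` occurs once, and the cyclic reading closes the gap with that same `a`.
    have hc := h.of_isRotated ⟨i, hw⟩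
    have hch : (pairSubword (a :: (s ++ a :: [])) a b).IsChain (· ≠ ·) := by
      simpa [CyclicallyAlternate, pairSubword] using hc
    simpa [List.count_eq_zero.mpr has] using count_eq_count_add_one_of_isChain_pairSubword hab hch
  · simpa [List.count_eq_zero.mpr has] using
      count_eq_count_add_one_of_isChain_pairSubword hab (h.of_isRotated ⟨i, hw⟩).isChain

theorem head?_pairSubword_of_occursBefore (hb : s.count b = 1) (hc : s.count c = 1)
    (h : OccursBefore s b c) : (pairSubword s b c).head? = some b := by
  obtain ⟨s₁, s₂, s₃, rfl⟩ := h
  have hb₁ : b ∉ s₁ := fun hm => by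
    have := List.count_pos_iff.mpr hm
    simp [List.count_append] at hb
    omega
  have hc₁ : c ∉ s₁ := fun hm => by
    have := List.count_pos_iff.mpr hm
    simp [List.count_append, List.count_cons] at hc
    omega
  have hnil : pairSubword s₁ b c = [] :=
    List.filter_eq_nil_iff.mpr fun z hz => by simp; grind
  simp [hnil]

theorem head?_pairSubword_eq_of_isRotated {v v' : List V} (hab : a ≠ b) (hac : a ≠ c)
    (hbc : b ≠ c)
    (hab' : CyclicallyAlternate (a :: v) a b) (hac' : CyclicallyAlternate (a :: v) a c)
    (hbc' : CyclicallyAlternate (a :: v) b c) (hr : a :: v ~r a :: v') :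
    (pairSubword v b c).head? = (pairSubword v' b c).head? := by
  obtain ⟨_ | ⟨a₁, p⟩, _ | ⟨a₂, q⟩, hpq, hqp⟩ := hr.exists_eq_append_swap
  · simp at hpq
  · simp_all
  · simp_all
  simp only [List.cons_append, List.cons.injEq] at hpq hqp
  obtain ⟨rfl, rfl⟩ := hpq
  obtain ⟨rfl, rfl⟩ := hqp
  have hpb := count_eq_count_add_one_of_isChain_pairSubword hab hab'.isChain
  have hpc := count_eq_count_add_one_of_isChain_pairSubword hac hac'.isChain
  have hmem : ∀ z ∈ pairSubword (a :: (p ++ a :: q)) b c, z = b ∨ z = c :=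
    fun _ => eq_or_eq_of_mem_pairSubword
  have hch := hbc'.isChain
  simp only [pairSubword_cons_of_ne hab hac, pairSubword_append] at hch hmem ⊢
  rcases hQ : pairSubword q b c with _ | ⟨z, r⟩
  · simp
  · rw [hQ] at hch hmem
    rw [(List.count_eq_count_iff_of_isChain_ne hbc hmem hch).mp (by simp; omega)]
    simp

theorem not_occursBefore_of_isCyclicGap (hab : a ≠ b) (hac : a ≠ c) (hbc : b ≠ c)
    (hab' : CyclicallyAlternate u a b) (hac' : CyclicallyAlternate u a c)
    (hbc' : CyclicallyAlternate u b c) (hs : IsCyclicGap u a s) (hs' : IsCyclicGap u a s')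
    (h : OccursBefore s b c) : ¬ OccursBefore s' c b := by
  intro h'
  have hb := hab'.count_eq_one_of_isCyclicGap hab hs
  have hc := hac'.count_eq_one_of_isCyclicGap hac hs
  have hb' := hab'.count_eq_one_of_isCyclicGap hab hs'
  have hc' := hac'.count_eq_one_of_isCyclicGap hac hs'
  obtain ⟨i, t, hw, -, -⟩ := hs
  obtain ⟨j, t', hw', -, -⟩ := hs'
  have hr : a :: (s ++ t) ~r a :: (s' ++ t') :=
    hw ▸ hw' ▸ (List.IsRotated.forall u i).trans ⟨j, rfl⟩
  have key := head?_pairSubword_eq_of_isRotated hab hac hbc (hab'.of_isRotated ⟨i, hw⟩)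
    (hac'.of_isRotated ⟨i, hw⟩) (hbc'.of_isRotated ⟨i, hw⟩) hr
  have hcb : (pairSubword s' b c).head? = some c := by
    rw [← head?_pairSubword_of_occursBefore hc' hb' h']
    simp [pairSubword, or_comm]
  simp [head?_pairSubword_of_occursBefore hb hc h, hcb] at key
  exact hbc key

end

theorem gap_order_constant_of_triangle_general
    {V : Type*} [DecidableEq V] (G : SimpleGraph V) (u : List V) (k : ℕ)
    (huniform : ∀ v : V, u.count v = k) (hrep : Represents G u)
    (a b c : V) (hab : G.Adj a b) (hac : G.Adj a c) (hbc : G.Adj b c) :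
    Xor' (∀ s : List V, IsCyclicGap u a s → OccursBefore s b c)
         (∀ s : List V, IsCyclicGap u a s → OccursBefore s c b) := by
  have hcyc {x y : V} (hxy : G.Adj x y) : CyclicallyAlternate u x y :=
    ((hrep.2 x y hxy.ne).mpr hxy).cyclicallyAlternate hxy.ne (by rw [huniform, huniform])
  have hmixed : ∀ {s s'}, IsCyclicGap u a s → IsCyclicGap u a s' →
      OccursBefore s b c → ¬ OccursBefore s' c b :=
    not_occursBefore_of_isCyclicGap hab.ne hac.ne hbc.ne (hcyc hab) (hcyc hac) (hcyc hbc)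
  have hmixed' : ∀ {s s'}, IsCyclicGap u a s → IsCyclicGap u a s' →
      OccursBefore s c b → ¬ OccursBefore s' b c :=
    not_occursBefore_of_isCyclicGap hac.ne hab.ne hbc.ne.symm (hcyc hac) (hcyc hab)
      (hcyc hbc.symm)
  have hsome {s} (hs : IsCyclicGap u a s) : OccursBefore s b c ∨ OccursBefore s c b :=
    occursBefore_or_occursBefore
      (List.count_pos_iff.mp (by rw [(hcyc hab).count_eq_one_of_isCyclicGap hab.ne hs]; simp))
      (List.count_pos_iff.mp (by rw [(hcyc hac).count_eq_one_of_isCyclicGap hac.ne hs]; simp))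
      hbc.ne
  obtain ⟨s₀, hs₀⟩ := exists_isCyclicGap (hrep.1 a)
  rcases hsome hs₀ with h | h
  · exact Or.inl ⟨fun s hs => (hsome hs).resolve_right (hmixed hs₀ hs h),
      fun hall => hmixed hs₀ hs₀ h (hall s₀ hs₀)⟩
  · exact Or.inr ⟨fun s hs => (hsome hs).resolve_left (hmixed' hs₀ hs h),
      fun hall => hmixed' hs₀ hs₀ h (hall s₀ hs₀)⟩

/-- If `u` is a uniform word-representant of `G` and `a, b, c` are distinct pairwise adjacent
vertices, then (viewing `u` as a cyclic word) exactly one of the following holds: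
(i) between every pair of cyclically consecutive occurrences of `a`, `b` occurs before `c`;
(ii) between every pair of cyclically consecutive occurrences of `a`, `c` occurs before `b`. -/
theorem gap_order_constant_of_triangle
    {V : Type*} [DecidableEq V] (G : SimpleGraph V) (u : List V) (k : ℕ) (hk : 1 ≤ k)
    (huniform : ∀ v : V, u.count v = k) (hrep : Represents G u)
    (a b c : V) (hab : G.Adj a b) (hac : G.Adj a c) (hbc : G.Adj b c) :
    Xor' (∀ s : List V, IsCyclicGap u a s → OccursBefore s b c)
         (∀ s : List V, IsCyclicGap u a s → OccursBefore s c b) :=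
  gap_order_constant_of_triangle_general G u k huniform hrep a b c hab hac hbc
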